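/- Let φ be a rational inner function on 𝔻^d, let α ∈ 𝕋, and let σ_α be the associated Clark measure. Let B ⊂ 𝕋^d be an open set such that lim_{r→1⁻} φ(rζ) ≠ α for every ζ ∈ B. For ζ ∈ 𝕋^d and 0 < r < 1 define D_r(ζ) = {η ∈ 𝕋^d : |rζ_j − η_j| ≤ 2(1−r) for j = 1,…,d}. Then for every ζ ∈ B, lim_{r→1⁻} σ_α(B ∩ D_r(ζ))/(1−r)^d = 0. -/

import Mathlib

/-!
By Knese's theorem `φ` has a unimodular radial limit `L` at every `ζ ∈ 𝕋^d`. First, `|q| = |p|` on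
`𝕋^d`: where `|q| < |p|`, `φ` would have non-unimodular radial limits on a relatively open, hence
non-null, piece of the torus. Then restrict `q/p` to the complex line through `ζ`: once the gcd is
cancelled, the denominator cannot vanish at `1`, and the limit is unimodular by continuity.

On the cube `D_r(ζ)` the Poisson kernel at `rζ` is at least `(4(1-r))⁻ᵈ`, so Markov's inequality
and the defining identity of `σ_α` give
`σ_α(D_r(ζ)) ≤ (4(1-r))ᵈ (1-|φ(rζ)|²)/|α-φ(rζ)|²`,
and the last factor tends to `0` because `φ(rζ) → L` with `|L| = 1` and `L ≠ α`.
-/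

open MeasureTheory Complex Filter Topology

noncomputable section

/-- The open unit polydisk `𝔻^d` in `ℂ^d`. -/
def polyDisk (d : ℕ) : Set (Fin d → ℂ) := {z | ∀ j, ‖z j‖ < 1}

/-- The distinguished boundary `𝕋^d` of the polydisk. -/
def polyTorus (d : ℕ) : Set (Fin d → ℂ) := {z | ∀ j, ‖z j‖ = 1}

/-- The product Poisson kernel `P_z(ζ) = ∏_j (1-|z_j|²)/|ζ_j - z_j|²`. -/
def poissonD (d : ℕ) (z ζ : Fin d → ℂ) : ℝ :=
  ∏ j, (1 - ‖z j‖ ^ 2) / ‖ζ j - z j‖ ^ 2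

/-- `φ` has radial limit `L` at `ζ`:  `φ(rζ) → L` as `r → 1⁻`. -/
def HasRadialLimit (d : ℕ) (φ : (Fin d → ℂ) → ℂ) (ζ : Fin d → ℂ) (L : ℂ) : Prop :=
  Tendsto (fun r : ℝ => φ (fun j => (r : ℂ) * ζ j)) (𝓝[<] (1 : ℝ)) (𝓝 L)

/-- Normalized Lebesgue measure on the d-torus, as a measure on `ℂ^d`. -/
def torusLebesgue (d : ℕ) : Measure (Fin d → ℂ) :=
  (ENNReal.ofReal ((2 * Real.pi) ^ d))⁻¹ •
    Measure.map (fun θ : Fin d → ℝ => fun j => Complex.exp ((θ j : ℂ) * Complex.I))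
      (MeasureTheory.volume.restrict (Set.pi Set.univ fun _ => Set.Ico 0 (2 * Real.pi)))

/-- `φ = q/p` is a rational inner function on `𝔻^d`: `p, q` have no common factor,
`p` is zero-free on the polydisk, `φ` maps `𝔻^d` to `𝔻`, and the radial limits of `φ`
are unimodular a.e. on `𝕋^d`. -/
structure IsRIFd (d : ℕ) (p q : MvPolynomial (Fin d) ℂ) : Prop where
  coprime : ∀ r : MvPolynomial (Fin d) ℂ, r ∣ p → r ∣ q → IsUnit r
  stable : ∀ z ∈ polyDisk d, MvPolynomial.eval z p ≠ 0
  mapsToDisk : ∀ z ∈ polyDisk d,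
    ‖MvPolynomial.eval z q / MvPolynomial.eval z p‖ < 1
  inner : ∀ᵐ ζ ∂(torusLebesgue d),
    ∃ L : ℂ, ‖L‖ = 1 ∧
      HasRadialLimit d (fun z => MvPolynomial.eval z q / MvPolynomial.eval z p) ζ L

/-- `σ` is the Clark measure of `φ` at parameter `α`: a positive Borel measure on `𝕋^d`
whose Poisson integral is `(1-|φ(z)|²)/|α-φ(z)|²`. -/
def IsClarkMeasureD (d : ℕ) (φ : (Fin d → ℂ) → ℂ) (α : ℂ) (σ : Measure (Fin d → ℂ)) : Prop :=
  σ (polyTorus d)ᶜ = 0 ∧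
  ∀ z ∈ polyDisk d,
    ∫⁻ ζ, ENNReal.ofReal (poissonD d z ζ) ∂σ =
      ENNReal.ofReal ((1 - ‖φ z‖ ^ 2) / ‖α - φ z‖ ^ 2)

/-- The unimodular level set `C_α(φ)`. -/
def levelSetD (d : ℕ) (φ : (Fin d → ℂ) → ℂ) (α : ℂ) : Set (Fin d → ℂ) :=
  closure {ζ | ζ ∈ polyTorus d ∧ HasRadialLimit d φ ζ α}

/-- The topological support of a measure: points all of whose open neighborhoods
have positive measure. -/
def measureSupport {X : Type*} [TopologicalSpace X] [MeasurableSpace X]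
    (μ : Measure X) : Set X :=
  {x | ∀ U : Set X, IsOpen U → x ∈ U → 0 < μ U}

/-- The cube `D_r(ζ) = {η ∈ 𝕋^d : |rζ_j − η_j| ≤ 2(1−r), j = 1,…,d}`. -/
def clarkCube (d : ℕ) (r : ℝ) (ζ : Fin d → ℂ) : Set (Fin d → ℂ) :=
  {η | η ∈ polyTorus d ∧ ∀ j, ‖(r : ℂ) * ζ j - η j‖ ≤ 2 * (1 - r)}

open Polynomial in
theorem Polynomial.eventually_eval_ne_zero_nhdsNE {R : Type*} [CommRing R] [IsDomain R]
    [TopologicalSpace R] [T1Space R] {g : R[X]} (hg : g ≠ 0) (a : R) :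
    ∀ᶠ t in 𝓝[≠] a, g.eval t ≠ 0 :=
  nhdsNE_le_cofinite a (Polynomial.finite_setOfPred_isRoot hg).compl_mem_cofinite

theorem tendsto_exp_mul_I_nhdsGT_zero :
    Tendsto (fun θ : ℝ => exp (θ * I)) (𝓝[>] 0) (𝓝[≠] 1) := by
  refine tendsto_nhdsWithin_of_tendsto_nhds_of_eventually_within _ ?_ ?_
  · simpa using ((continuous_ofReal.mul continuous_const).cexp.tendsto 0).mono_left
      nhdsWithin_le_nhds
  · filter_upwards [Ioo_mem_nhdsGT Real.two_pi_pos] with θ ⟨hθ0, hθ2π⟩ hθ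
    obtain ⟨n, hn⟩ := Complex.exp_eq_one_iff.1 hθ
    have hθn : θ = n * (2 * Real.pi) := by simpa using congrArg Complex.im hn
    have hn0 : (0 : ℝ) < n := by nlinarith [Real.pi_pos]
    have hn1 : (n : ℝ) < 1 := by nlinarith [Real.pi_pos]
    have : (0 : ℤ) < n := by exact_mod_cast hn0
    have : n < 1 := by exact_mod_cast hn1
    omega

theorem tendsto_ofReal_nhdsLT_one :
    Tendsto (fun r : ℝ => (r : ℂ)) (𝓝[<] 1) (𝓝[≠] 1) := by
  refine tendsto_nhdsWithin_of_tendsto_nhds_of_eventually_within _ ?_ ?_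
  · simpa using (continuous_ofReal.tendsto 1).mono_left nhdsWithin_le_nhds
  · filter_upwards [self_mem_nhdsWithin] with r (hr : r < 1)
    simpa using hr.ne

open Polynomial in
theorem Polynomial.norm_eval_one_eq_of_norm_mul_eval_eq {P Q g : ℂ[X]} (hg : g ≠ 0)
    (h : ∀ t : ℂ, ‖t‖ = 1 → ‖(g * Q).eval t‖ = ‖(g * P).eval t‖) :
    ‖Q.eval 1‖ = ‖P.eval 1‖ := by
  have hE := tendsto_exp_mul_I_nhdsGT_zero
  have hlim (R : ℂ[X]) :
      Tendsto (fun θ : ℝ => ‖R.eval (exp (θ * I))‖) (𝓝[>] 0) (𝓝 ‖R.eval 1‖) :=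
    (R.continuous.norm.tendsto 1).comp (hE.mono_right nhdsWithin_le_nhds)
  refine tendsto_nhds_unique_of_eventuallyEq (hlim Q) (hlim P) ?_
  filter_upwards [hE.eventually (g.eventually_eval_ne_zero_nhdsNE hg 1)] with θ hθ
  have := h _ (norm_exp_ofReal_mul_I θ)
  rw [eval_mul, eval_mul, norm_mul, norm_mul] at this
  exact mul_left_cancel₀ (norm_ne_zero_iff.2 hθ) this

open Polynomial in
theorem Polynomial.exists_norm_eq_one_tendsto_div {P Q : ℂ[X]} (hP : P ≠ 0)
    (hPQ : ∀ t : ℂ, ‖t‖ = 1 → ‖Q.eval t‖ = ‖P.eval t‖) :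
    ∃ L : ℂ, ‖L‖ = 1 ∧
      Tendsto (fun r : ℝ => Q.eval (r : ℂ) / P.eval (r : ℂ)) (𝓝[<] 1) (𝓝 L) := by
  set g := gcd P Q
  have hg : g ≠ 0 := gcd_ne_zero_of_left hP
  have hP₁ : g * (P / g) = P := EuclideanDomain.mul_div_cancel' hg (gcd_dvd_left P Q)
  have hQ₁ : g * (Q / g) = Q := EuclideanDomain.mul_div_cancel' hg (gcd_dvd_right P Q)
  set P₁ := P / g
  set Q₁ := Q / g
  have hcop : IsCoprime P₁ Q₁ := isCoprime_div_gcd_div_gcd_of_gcd_ne_zero hg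
  have hnorm : ‖Q₁.eval 1‖ = ‖P₁.eval 1‖ :=
    norm_eval_one_eq_of_norm_mul_eval_eq hg (by rwa [hP₁, hQ₁])
  -- in lowest terms, `P₁` and `Q₁` cannot both vanish at `1`
  have hP₁1 : P₁.eval 1 ≠ 0 := by
    intro h0
    have hQ0 : Q₁.eval 1 = 0 := norm_eq_zero.1 (by rw [hnorm, h0, norm_zero])
    exact not_isUnit_X_sub_C 1 (hcop.isUnit_of_dvd' (dvd_iff_isRoot.2 h0) (dvd_iff_isRoot.2 hQ0))
  refine ⟨Q₁.eval 1 / P₁.eval 1, by rw [norm_div, hnorm, div_self (norm_ne_zero_iff.2 hP₁1)], ?_⟩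
  have hr := tendsto_ofReal_nhdsLT_one
  refine (((Q₁.continuous.tendsto 1).div (P₁.continuous.tendsto 1) hP₁1).comp
    (hr.mono_right nhdsWithin_le_nhds)).congr' ?_
  filter_upwards [hr.eventually (g.eventually_eval_ne_zero_nhdsNE hg 1)] with r hgr
  rw [← hP₁, ← hQ₁, eval_mul, eval_mul, mul_div_mul_left _ _ hgr]
  rfl

section Polydisk

variable {d : ℕ}

theorem isClosed_polyTorus (d : ℕ) : IsClosed (polyTorus d) := by
  simp only [polyTorus, Set.ofPred_forall]
  exact isClosed_iInter fun j => isClosed_eq (by fun_prop) continuous_const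

theorem smul_mem_polyDisk {ζ : Fin d → ℂ} (hζ : ζ ∈ polyTorus d) {t : ℂ} (ht : ‖t‖ < 1) :
    (fun j => t * ζ j) ∈ polyDisk d := fun j => by rwa [norm_mul, hζ j, mul_one]

theorem smul_mem_polyTorus {ζ : Fin d → ℂ} (hζ : ζ ∈ polyTorus d) {t : ℂ} (ht : ‖t‖ = 1) :
    (fun j => t * ζ j) ∈ polyTorus d := fun j => by rwa [norm_mul, hζ j, mul_one]

theorem tendsto_radial (ζ : Fin d → ℂ) :
    Tendsto (fun r : ℝ => fun j => (r : ℂ) * ζ j) (𝓝[<] 1) (𝓝 ζ) := by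
  simpa using ((continuous_pi fun j => continuous_ofReal.mul continuous_const).tendsto
    (1 : ℝ)).mono_left (nhdsWithin_le_nhds (s := Set.Iio 1))

theorem eventually_radial_mem_polyDisk {ζ : Fin d → ℂ} (hζ : ζ ∈ polyTorus d) :
    ∀ᶠ r : ℝ in 𝓝[<] 1, (fun j => (r : ℂ) * ζ j) ∈ polyDisk d := by
  filter_upwards [Ioo_mem_nhdsLT one_pos] with r hr
  exact smul_mem_polyDisk hζ (by rw [norm_real, Real.norm_of_nonneg hr.1.le]; exact hr.2)

theorem ContinuousAt.hasRadialLimit {φ : (Fin d → ℂ) → ℂ} {ζ : Fin d → ℂ}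
    (hφ : ContinuousAt φ ζ) : HasRadialLimit d φ ζ (φ ζ) :=
  hφ.tendsto.comp (tendsto_radial ζ)

end Polydisk

open Polynomial in
def MvPolynomial.lineRestrict {σ R : Type*} [CommSemiring R] (f : MvPolynomial σ R)
    (ζ : σ → R) : R[X] :=
  MvPolynomial.eval₂ Polynomial.C (fun j => Polynomial.C (ζ j) * Polynomial.X) f

open Polynomial in
theorem MvPolynomial.eval_lineRestrict {σ R : Type*} [CommSemiring R] (f : MvPolynomial σ R)
    (ζ : σ → R) (t : R) : (f.lineRestrict ζ).eval t = MvPolynomial.eval (fun j => t * ζ j) f := by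
  rw [lineRestrict, polynomial_eval_eval₂]
  simp only [Polynomial.eval_mul, Polynomial.eval_C, Polynomial.eval_X, mul_comm (ζ _)]
  congr 1
  ext
  simp

theorem exists_mem_Icc_exp_mul_I_eq {w : ℂ} (hw : ‖w‖ = 1) :
    ∃ θ ∈ Set.Icc 0 (2 * Real.pi), exp (θ * I) = w := by
  have hpolar := norm_mul_exp_arg_mul_I (-w)
  rw [norm_neg, hw, ofReal_one, one_mul] at hpolar
  refine ⟨arg (-w) + Real.pi, ⟨?_, ?_⟩, ?_⟩
  · linarith [neg_pi_lt_arg (-w)]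
  · linarith [arg_le_pi (-w)]
  · rw [ofReal_add, add_mul, exp_add, hpolar, exp_pi_mul_I]
    ring

theorem torusLebesgue_inter_polyTorus_pos {d : ℕ} {V : Set (Fin d → ℂ)} (hV : IsOpen V)
    {τ : Fin d → ℂ} (hτ : τ ∈ V ∩ polyTorus d) : 0 < torusLebesgue d (V ∩ polyTorus d) := by
  set E : (Fin d → ℝ) → Fin d → ℂ := fun θ j => exp (θ j * I)
  have hE : Continuous E := by fun_prop
  choose θ hθ hEθ using fun j => exists_mem_Icc_exp_mul_I_eq (hτ.2 j)
  have hpre : E ⁻¹' (V ∩ polyTorus d) = E ⁻¹' V := by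
    ext θ
    simp [E, polyTorus, norm_exp_ofReal_mul_I]
  rw [torusLebesgue, Measure.smul_apply, Measure.map_apply hE.measurable
    (hV.measurableSet.inter (isClosed_polyTorus d).measurableSet), hpre,
    Measure.restrict_apply (hV.preimage hE).measurableSet, smul_eq_mul]
  refine ENNReal.mul_pos (ENNReal.inv_ne_zero.2 ENNReal.ofReal_ne_top) ?_
  -- `θ` may lie on the boundary of the box of angles, but the open set `E ⁻¹' V` still meets
  -- its interior
  have hθ_closure : θ ∈ closure (Set.univ.pi fun _ => Set.Ioo 0 (2 * Real.pi)) := by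
    rw [closure_pi_set, closure_Ioo Real.two_pi_pos.ne]
    exact fun j _ => hθ j
  have hne := mem_closure_iff.1 hθ_closure _ (hV.preimage hE) (by simpa [E, hEθ] using hτ.1)
  refine (((hV.preimage hE).inter (isOpen_set_pi Set.finite_univ fun _ _ => isOpen_Ioo)).measure_pos
    volume hne |>.trans_le ?_).ne'
  exact measure_mono
    (Set.inter_subset_inter_right _ (Set.pi_mono fun _ _ => Set.Ioo_subset_Ico_self))

namespace IsRIFd

variable {d : ℕ} {p q : MvPolynomial (Fin d) ℂ}

theorem norm_eval_le (hRIF : IsRIFd d p q) {ζ : Fin d → ℂ} (hζ : ζ ∈ polyTorus d) :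
    ‖MvPolynomial.eval ζ q‖ ≤ ‖MvPolynomial.eval ζ p‖ := by
  have hnorm {P : MvPolynomial (Fin d) ℂ} :=
    ((MvPolynomial.continuous_eval P).norm.tendsto ζ).comp (tendsto_radial ζ)
  refine le_of_tendsto_of_tendsto (hnorm (P := q)) (hnorm (P := p)) ?_
  filter_upwards [eventually_radial_mem_polyDisk hζ] with r hr
  have h := hRIF.mapsToDisk _ hr
  rw [norm_div, div_lt_one (norm_pos_iff.2 (hRIF.stable _ hr))] at h
  exact h.le

theorem norm_eval_eq (hRIF : IsRIFd d p q) {ζ : Fin d → ℂ} (hζ : ζ ∈ polyTorus d) :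
    ‖MvPolynomial.eval ζ q‖ = ‖MvPolynomial.eval ζ p‖ := by
  refine (hRIF.norm_eval_le hζ).antisymm (not_lt.1 fun hlt => ?_)
  set V := {z | ‖MvPolynomial.eval z q‖ < ‖MvPolynomial.eval z p‖}
  have hV : IsOpen V :=
    isOpen_lt (MvPolynomial.continuous_eval q).norm (MvPolynomial.continuous_eval p).norm
  have hbad : V ∩ polyTorus d ⊆ {ξ | ¬ ∃ L : ℂ, ‖L‖ = 1 ∧
      HasRadialLimit d (fun z => MvPolynomial.eval z q / MvPolynomial.eval z p) ξ L} := by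
    rintro ξ ⟨hξ, -⟩ ⟨L, hL1, hL⟩
    have hpξ : MvPolynomial.eval ξ p ≠ 0 := norm_pos_iff.1 ((norm_nonneg _).trans_lt hξ)
    have hφ : ContinuousAt (fun z => MvPolynomial.eval z q / MvPolynomial.eval z p) ξ :=
      (MvPolynomial.continuous_eval q).continuousAt.div
        (MvPolynomial.continuous_eval p).continuousAt hpξ
    obtain rfl := tendsto_nhds_unique hL hφ.hasRadialLimit
    rw [norm_div, div_eq_one_iff_eq (norm_ne_zero_iff.2 hpξ)] at hL1
    exact hξ.ne hL1
  exact (torusLebesgue_inter_polyTorus_pos hV ⟨hlt, hζ⟩).ne'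
    (measure_mono_null hbad (ae_iff.1 hRIF.inner))

theorem exists_norm_eq_one_hasRadialLimit (hRIF : IsRIFd d p q) {ζ : Fin d → ℂ}
    (hζ : ζ ∈ polyTorus d) : ∃ L : ℂ, ‖L‖ = 1 ∧
      HasRadialLimit d (fun z => MvPolynomial.eval z q / MvPolynomial.eval z p) ζ L := by
  have hP : p.lineRestrict ζ ≠ 0 := by
    intro h
    apply hRIF.stable _ (smul_mem_polyDisk hζ (by simp : ‖(0 : ℂ)‖ < 1))
    rw [← MvPolynomial.eval_lineRestrict, h, Polynomial.eval_zero]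
  have hPQ (t : ℂ) (ht : ‖t‖ = 1) :
      ‖(q.lineRestrict ζ).eval t‖ = ‖(p.lineRestrict ζ).eval t‖ := by
    simpa only [MvPolynomial.eval_lineRestrict] using hRIF.norm_eval_eq (smul_mem_polyTorus hζ ht)
  obtain ⟨L, hL1, hL⟩ := Polynomial.exists_norm_eq_one_tendsto_div hP hPQ
  exact ⟨L, hL1, by simpa only [HasRadialLimit, MvPolynomial.eval_lineRestrict] using hL⟩

end IsRIFd

theorem inv_four_mul_le_poisson {r : ℝ} (hr0 : 0 ≤ r) (hr1 : r < 1) {z w : ℂ} (hz : ‖z‖ = r)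
    (hw : ‖w‖ = 1) (hzw : ‖z - w‖ ≤ 2 * (1 - r)) :
    (4 * (1 - r))⁻¹ ≤ (1 - ‖z‖ ^ 2) / ‖w - z‖ ^ 2 := by
  have hdist : 1 - r ≤ ‖w - z‖ := by simpa [hw, hz] using norm_sub_norm_le w z
  rw [le_div_iff₀ (by nlinarith), hz]
  calc (4 * (1 - r))⁻¹ * ‖w - z‖ ^ 2 ≤ (4 * (1 - r))⁻¹ * (2 * (1 - r)) ^ 2 := by
        gcongr
        rwa [norm_sub_rev]
    _ = 1 - r := by field_simp; ring
    _ ≤ 1 - r ^ 2 := by nlinarith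

theorem inv_four_mul_pow_le_poissonD {d : ℕ} {r : ℝ} (hr0 : 0 ≤ r) (hr1 : r < 1)
    {ζ η : Fin d → ℂ} (hζ : ζ ∈ polyTorus d) (hη : η ∈ clarkCube d r ζ) :
    (4 * (1 - r))⁻¹ ^ d ≤ poissonD d (fun j => (r : ℂ) * ζ j) η := by
  rw [poissonD, ← Fin.prod_const]
  refine Finset.prod_le_prod (fun _ _ => inv_nonneg.2 (by linarith)) fun j _ => ?_
  exact inv_four_mul_le_poisson hr0 hr1 (by simp [hζ j, abs_of_nonneg hr0]) (hη.1 j) (hη.2 j)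

theorem IsClarkMeasureD.measure_clarkCube_div_le {d : ℕ} {φ : (Fin d → ℂ) → ℂ} {α : ℂ}
    {σ : Measure (Fin d → ℂ)} (hσ : IsClarkMeasureD d φ α σ) {ζ : Fin d → ℂ}
    (hζ : ζ ∈ polyTorus d) {r : ℝ} (hr0 : 0 ≤ r) (hr1 : r < 1) :
    σ (clarkCube d r ζ) / ENNReal.ofReal ((1 - r) ^ d) ≤
      ENNReal.ofReal (4 ^ d * ((1 - ‖φ (fun j => (r : ℂ) * ζ j)‖ ^ 2) /
        ‖α - φ (fun j => (r : ℂ) * ζ j)‖ ^ 2)) := by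
  set z : Fin d → ℂ := fun j => (r : ℂ) * ζ j
  have hz : z ∈ polyDisk d := smul_mem_polyDisk hζ (by simpa [abs_of_nonneg hr0])
  have hc : 0 < (4 * (1 - r)) ^ d := pow_pos (by linarith) d
  have hmeas : Measurable fun η => ENNReal.ofReal (poissonD d z η) := by
    unfold poissonD; fun_prop
  have hmarkov := mul_meas_ge_le_lintegral (μ := σ) hmeas (ENNReal.ofReal ((4 * (1 - r)) ^ d)⁻¹)
  rw [hσ.2 z hz, ENNReal.ofReal_inv_of_pos hc,
    ENNReal.inv_mul_le_iff (by simpa using hc) ENNReal.ofReal_ne_top] at hmarkov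
  have hcube : clarkCube d r ζ ⊆
      {η | (ENNReal.ofReal ((4 * (1 - r)) ^ d))⁻¹ ≤ ENNReal.ofReal (poissonD d z η)} :=
    fun η hη => by
      rw [← ENNReal.ofReal_inv_of_pos hc, ← inv_pow]
      exact ENNReal.ofReal_le_ofReal (inv_four_mul_pow_le_poissonD hr0 hr1 hζ hη)
  refine ENNReal.div_le_of_le_mul ((measure_mono hcube).trans (hmarkov.trans_eq ?_))
  rw [← ENNReal.ofReal_mul hc.le, ← ENNReal.ofReal_mul' (by positivity)]
  congr 1
  rw [mul_pow]
  ring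

theorem tendsto_one_sub_norm_sq_div_norm_sub_sq {ι : Type*} {l : Filter ι} {f : ι → ℂ}
    {L α : ℂ} (hf : Tendsto f l (𝓝 L)) (hL : ‖L‖ = 1) (hLα : L ≠ α) :
    Tendsto (fun x => (1 - ‖f x‖ ^ 2) / ‖α - f x‖ ^ 2) l (𝓝 0) := by
  have hden : ‖α - L‖ ^ 2 ≠ 0 := by simpa [sub_eq_zero] using hLα.symm
  simpa [hL, Pi.div_def] using ((tendsto_const_nhds (x := (1 : ℝ))).sub (hf.norm.pow 2)).div
    ((tendsto_const_nhds.sub hf).norm.pow 2) hden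

theorem clark_density_zero_general
    (d : ℕ) (p q : MvPolynomial (Fin d) ℂ)
    (hRIF : IsRIFd d p q) (α : ℂ)
    (σ : Measure (Fin d → ℂ))
    (hσ : IsClarkMeasureD d (fun z => MvPolynomial.eval z q / MvPolynomial.eval z p) α σ)
    (U : Set (Fin d → ℂ))
    (hB : ∀ ζ ∈ U ∩ polyTorus d,
      ¬ HasRadialLimit d (fun z => MvPolynomial.eval z q / MvPolynomial.eval z p) ζ α) :
    ∀ ζ ∈ U ∩ polyTorus d,
      Tendsto (fun r : ℝ => σ ((U ∩ polyTorus d) ∩ clarkCube d r ζ) / ENNReal.ofReal ((1 - r) ^ d))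
        (𝓝[<] (1 : ℝ)) (𝓝 0) := by
  intro ζ hζ
  obtain ⟨L, hL1, hL⟩ := hRIF.exists_norm_eq_one_hasRadialLimit hζ.2
  have hLα : L ≠ α := fun h => hB ζ hζ (h ▸ hL)
  have hbound := ENNReal.tendsto_ofReal
    ((tendsto_one_sub_norm_sq_div_norm_sub_sq hL hL1 hLα).const_mul (4 ^ d))
  rw [mul_zero, ENNReal.ofReal_zero] at hbound
  refine tendsto_of_tendsto_of_tendsto_of_le_of_le' tendsto_const_nhds hbound
    (Eventually.of_forall fun _ => zero_le) ?_
  filter_upwards [Ioo_mem_nhdsLT one_pos] with r hr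
  exact (ENNReal.div_le_div_right (measure_mono Set.inter_subset_right) _).trans
    (hσ.measure_clarkCube_div_le hζ.2 hr.1.le hr.2)

/-- Let `φ` be a rational inner function on `𝔻^d`, `α ∈ 𝕋`, and `σ_α`
the associated Clark measure. Let `B ⊆ 𝕋^d` be an open subset of the torus on which the
radial limit of `φ` is never `α`. Then for every `ζ ∈ B`,
`σ_α(B ∩ D_r(ζ))/(1−r)^d → 0` as `r → 1⁻`. -/
theorem clark_density_zero
    (d : ℕ) (hd : 0 < d) (p q : MvPolynomial (Fin d) ℂ)
    (hRIF : IsRIFd d p q) (α : ℂ) (hα : ‖α‖ = 1)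
    (σ : Measure (Fin d → ℂ))
    (hσ : IsClarkMeasureD d (fun z => MvPolynomial.eval z q / MvPolynomial.eval z p) α σ)
    (U : Set (Fin d → ℂ)) (hU : IsOpen U)
    (hB : ∀ ζ ∈ U ∩ polyTorus d,
      ¬ HasRadialLimit d (fun z => MvPolynomial.eval z q / MvPolynomial.eval z p) ζ α) :
    ∀ ζ ∈ U ∩ polyTorus d,
      Tendsto (fun r : ℝ => σ ((U ∩ polyTorus d) ∩ clarkCube d r ζ) / ENNReal.ofReal ((1 - r) ^ d))
        (𝓝[<] (1 : ℝ)) (𝓝 0) :=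
  clark_density_zero_general d p q hRIF α σ hσ U hB
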